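/- Let {y_k}_{k≥0} be an arbitrary nonnegative real sequence and define a_k(μ) = y_k (μ)_k / ( (2μ)_k k! ) for μ > 0. Then for every μ > 0, all α, β > 0, and every integer m ≥ 0, Σ_{k=0}^{m} [ a_k(μ+α)a_{m−k}(μ+β) − a_k(μ)a_{m−k}(μ+α+β) ] ≤ 0; moreover, if y_k > 0 for all k, then this sum is strictly negative for every m ≥ 2. In other words, the formal power series y(μ;x) = Σ_{k≥0} y_k (μ)_k x^k / ( (2μ)_k k! ) is coefficient-wise log-convex in μ on (0,∞). -/

import Mathlib

/-- The rising factorial (Pochhammer symbol) `(μ)_n = μ(μ+1)⋯(μ+n−1)`. -/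
noncomputable def risingFactorial (μ : ℝ) : ℕ → ℝ
  | 0 => 1
  | n + 1 => risingFactorial μ n * (μ + n)

/-- The coefficients `a_k(μ) = y_k (μ)_k / ((2μ)_k k!)`. -/
noncomputable def coeff (y : ℕ → ℝ) (k : ℕ) (μ : ℝ) : ℝ :=
  y k * risingFactorial μ k / (risingFactorial (2 * μ) k * (Nat.factorial k : ℝ))

/-!
Write `a_k(s) = (y_k / k!) ∏_{j<k} f_j(s)` with `f_j(s) = (s + j) / (2s + j)`. Each factor is
positive and decreasing, and satisfies `f_j(μ+α) f_j(μ+β) ≤ f_j(μ) f_j(μ+α+β)`, the gap being an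
explicit multiple of `α β j`; these properties pass to every product `P` of factors. For a
decreasing positive `P`, `P(μ+α) P(μ+β) ≤ P(μ) P(μ+α+β)` upgrades to
`P(μ+α) + P(μ+β) ≤ P(μ) + P(μ+α+β)`. Splitting `∏_{j<l} = ∏_{j<k} · ∏_{k≤j<l}` for `k ≤ l`, the two
inequalities combine to show that the terms `k` and `m - k` of the Turánian coefficient add up to
a nonpositive number, which is negative for `k = 0` as soon as the factor `f_1` occurs, i.e. `m ≥ 2`.
-/

open Finset

lemma risingFactorial_eq_prod (s : ℝ) (k : ℕ) : risingFactorial s k = ∏ j ∈ range k, (s + j) := by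
  induction k with
  | zero => rfl
  | succ k ih => rw [risingFactorial, ih, prod_range_succ]

noncomputable def ratioFactor (j : ℕ) (s : ℝ) : ℝ := (s + j) / (2 * s + j)

/-- `(s)_k / (2s)_k`, as a product of factors `ratioFactor j s`. -/
noncomputable def pochRatio (k : ℕ) (s : ℝ) : ℝ := ∏ j ∈ range k, ratioFactor j s

lemma pochRatio_zero (s : ℝ) : pochRatio 0 s = 1 := prod_range_zero _

lemma coeff_eq_mul_pochRatio (y : ℕ → ℝ) (k : ℕ) (s : ℝ) :
    coeff y k s = y k / k.factorial * pochRatio k s := by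
  simp only [coeff, pochRatio, ratioFactor, prod_div_distrib, risingFactorial_eq_prod]
  ring

section ratioFactor

variable {μ α β s t : ℝ}

lemma ratioFactor_pos (j : ℕ) (hs : 0 < s) : 0 < ratioFactor j s := by
  unfold ratioFactor
  positivity

lemma ratioFactor_antitone (j : ℕ) (hs : 0 < s) (hst : s ≤ t) :
    ratioFactor j t ≤ ratioFactor j s := by
  have ht : 0 < t := hs.trans_le hst
  unfold ratioFactor
  rw [div_le_div_iff₀ (by positivity) (by positivity)]
  nlinarith [mul_le_mul_of_nonneg_right hst (Nat.cast_nonneg (α := ℝ) j)]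

lemma ratioFactor_turan_gap (j : ℕ) (hμ : 0 < μ) (hα : 0 ≤ α) (hβ : 0 ≤ β) :
    ratioFactor j μ * ratioFactor j (μ + α + β) - ratioFactor j (μ + α) * ratioFactor j (μ + β)
      = α * β * j * (2 * (2 * μ + α + β) + 3 * j) /
        ((2 * μ + j) * (2 * (μ + α + β) + j) * (2 * (μ + α) + j) * (2 * (μ + β) + j)) := by
  unfold ratioFactor
  have : (0 : ℝ) < 2 * μ + j := by positivity
  have : (0 : ℝ) < 2 * (μ + α) + j := by positivity
  have : (0 : ℝ) < 2 * (μ + β) + j := by positivity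
  have : (0 : ℝ) < 2 * (μ + α + β) + j := by positivity
  field_simp
  ring

lemma ratioFactor_turan (j : ℕ) (hμ : 0 < μ) (hα : 0 ≤ α) (hβ : 0 ≤ β) :
    ratioFactor j (μ + α) * ratioFactor j (μ + β) ≤ ratioFactor j μ * ratioFactor j (μ + α + β) :=
  sub_nonneg.1 (by rw [ratioFactor_turan_gap j hμ hα hβ]; positivity)

lemma ratioFactor_turan_strict {j : ℕ} (hj : 0 < j) (hμ : 0 < μ) (hα : 0 < α) (hβ : 0 < β) :
    ratioFactor j (μ + α) * ratioFactor j (μ + β) < ratioFactor j μ * ratioFactor j (μ + α + β) :=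
  sub_pos.1 (by rw [ratioFactor_turan_gap j hμ hα.le hβ.le]; positivity)

variable (S : Finset ℕ)

lemma prod_ratioFactor_pos (hs : 0 < s) : 0 < ∏ j ∈ S, ratioFactor j s :=
  prod_pos fun j _ => ratioFactor_pos j hs

lemma prod_ratioFactor_antitone (hs : 0 < s) (hst : s ≤ t) :
    ∏ j ∈ S, ratioFactor j t ≤ ∏ j ∈ S, ratioFactor j s :=
  prod_le_prod (fun j _ => (ratioFactor_pos j (hs.trans_le hst)).le)
    fun j _ => ratioFactor_antitone j hs hst

lemma prod_ratioFactor_turan (hμ : 0 < μ) (hα : 0 ≤ α) (hβ : 0 ≤ β) :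
    (∏ j ∈ S, ratioFactor j (μ + α)) * ∏ j ∈ S, ratioFactor j (μ + β)
      ≤ (∏ j ∈ S, ratioFactor j μ) * ∏ j ∈ S, ratioFactor j (μ + α + β) := by
  simp only [← prod_mul_distrib]
  exact prod_le_prod (fun j _ => (mul_pos (ratioFactor_pos j (by positivity))
    (ratioFactor_pos j (by positivity))).le) fun j _ => ratioFactor_turan j hμ hα hβ

lemma prod_ratioFactor_turan_strict {S : Finset ℕ} (hS : ∃ j ∈ S, 0 < j)
    (hμ : 0 < μ) (hα : 0 < α) (hβ : 0 < β) :
    (∏ j ∈ S, ratioFactor j (μ + α)) * ∏ j ∈ S, ratioFactor j (μ + β)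
      < (∏ j ∈ S, ratioFactor j μ) * ∏ j ∈ S, ratioFactor j (μ + α + β) := by
  simp only [← prod_mul_distrib]
  obtain ⟨j, hjS, hj⟩ := hS
  exact prod_lt_prod (fun j _ => mul_pos (ratioFactor_pos j (by positivity))
      (ratioFactor_pos j (by positivity)))
    (fun j _ => ratioFactor_turan j hμ hα.le hβ.le)
    ⟨j, hjS, ratioFactor_turan_strict hj hμ hα hβ⟩

end ratioFactor

section

variable {p q x y : ℝ}

lemma add_le_add_of_mul_le_mul_of_le (hx : 0 < x) (hpx : p ≤ x) (hqx : q ≤ x)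
    (h : p * q ≤ x * y) : p + q ≤ x + y := by
  nlinarith [mul_nonneg (sub_nonneg.2 hpx) (sub_nonneg.2 hqx)]

lemma add_lt_add_of_mul_lt_mul_of_le (hx : 0 < x) (hpx : p ≤ x) (hqx : q ≤ x)
    (h : p * q < x * y) : p + q < x + y := by
  nlinarith [mul_nonneg (sub_nonneg.2 hpx) (sub_nonneg.2 hqx)]

end

section turan

variable {μ α β : ℝ}

lemma prod_ratioFactor_add_turan (S : Finset ℕ) (hμ : 0 < μ) (hα : 0 ≤ α) (hβ : 0 ≤ β) :
    ∏ j ∈ S, ratioFactor j (μ + α) + ∏ j ∈ S, ratioFactor j (μ + β)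
      ≤ ∏ j ∈ S, ratioFactor j μ + ∏ j ∈ S, ratioFactor j (μ + α + β) :=
  add_le_add_of_mul_le_mul_of_le (prod_ratioFactor_pos S hμ)
    (prod_ratioFactor_antitone S hμ (by linarith)) (prod_ratioFactor_antitone S hμ (by linarith))
    (prod_ratioFactor_turan S hμ hα hβ)

lemma prod_ratioFactor_add_turan_strict {S : Finset ℕ} (hS : ∃ j ∈ S, 0 < j)
    (hμ : 0 < μ) (hα : 0 < α) (hβ : 0 < β) :
    ∏ j ∈ S, ratioFactor j (μ + α) + ∏ j ∈ S, ratioFactor j (μ + β)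
      < ∏ j ∈ S, ratioFactor j μ + ∏ j ∈ S, ratioFactor j (μ + α + β) :=
  add_lt_add_of_mul_lt_mul_of_le (prod_ratioFactor_pos S hμ)
    (prod_ratioFactor_antitone S hμ (by linarith)) (prod_ratioFactor_antitone S hμ (by linarith))
    (prod_ratioFactor_turan_strict hS hμ hα hβ)

lemma pochRatio_turan_pair_of_le {k l : ℕ} (hkl : k ≤ l) (hμ : 0 < μ) (hα : 0 ≤ α) (hβ : 0 ≤ β) :
    pochRatio k (μ + α) * pochRatio l (μ + β) + pochRatio l (μ + α) * pochRatio k (μ + β)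
      ≤ pochRatio k μ * pochRatio l (μ + α + β) + pochRatio l μ * pochRatio k (μ + α + β) := by
  set R : ℝ → ℝ := fun s => ∏ j ∈ Ico k l, ratioFactor j s
  have hsplit : ∀ s, pochRatio l s = pochRatio k s * R s := fun s =>
    (prod_range_mul_prod_Ico (ratioFactor · s) hkl).symm
  simp only [hsplit]
  calc _ = pochRatio k (μ + α) * pochRatio k (μ + β) * (R (μ + α) + R (μ + β)) := by ring
    _ ≤ pochRatio k μ * pochRatio k (μ + α + β) * (R μ + R (μ + α + β)) :=
      mul_le_mul (prod_ratioFactor_turan _ hμ hα hβ) (prod_ratioFactor_add_turan _ hμ hα hβ)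
        (add_pos (prod_ratioFactor_pos _ (by positivity))
          (prod_ratioFactor_pos _ (by positivity))).le
        (mul_pos (prod_ratioFactor_pos _ hμ) (prod_ratioFactor_pos _ (by positivity))).le
    _ = _ := by ring

lemma pochRatio_turan_pair (k l : ℕ) (hμ : 0 < μ) (hα : 0 ≤ α) (hβ : 0 ≤ β) :
    pochRatio k (μ + α) * pochRatio l (μ + β) + pochRatio l (μ + α) * pochRatio k (μ + β)
      ≤ pochRatio k μ * pochRatio l (μ + α + β) + pochRatio l μ * pochRatio k (μ + α + β) := by
  rcases le_total k l with hkl | hlk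
  · exact pochRatio_turan_pair_of_le hkl hμ hα hβ
  · linarith [pochRatio_turan_pair_of_le hlk hμ hα hβ]

lemma pochRatio_add_turan_strict {m : ℕ} (hm : 2 ≤ m) (hμ : 0 < μ) (hα : 0 < α) (hβ : 0 < β) :
    pochRatio m (μ + α) + pochRatio m (μ + β) < pochRatio m μ + pochRatio m (μ + α + β) :=
  prod_ratioFactor_add_turan_strict ⟨1, mem_range.2 hm, one_pos⟩ hμ hα hβ

end turan

noncomputable def turanTerm (y : ℕ → ℝ) (μ α β : ℝ) (m k : ℕ) : ℝ :=
  coeff y k (μ + α) * coeff y (m - k) (μ + β) - coeff y k μ * coeff y (m - k) (μ + α + β)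

section turanTerm

variable {y : ℕ → ℝ} {μ α β : ℝ} {m k : ℕ}

lemma turanTerm_add_reflect_nonpos (hy : ∀ k, 0 ≤ y k) (hμ : 0 < μ) (hα : 0 ≤ α) (hβ : 0 ≤ β)
    (hk : k ≤ m) : turanTerm y μ α β m k + turanTerm y μ α β m (m - k) ≤ 0 := by
  have hc : 0 ≤ y k / k.factorial * (y (m - k) / (m - k).factorial) := by
    have := hy k; have := hy (m - k); positivity
  unfold turanTerm
  rw [Nat.sub_sub_self hk]
  simp only [coeff_eq_mul_pochRatio]
  linarith [mul_le_mul_of_nonneg_left (pochRatio_turan_pair k (m - k) hμ hα hβ) hc]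

lemma turanTerm_zero_add_self_neg (hy : ∀ k, 0 < y k) (hμ : 0 < μ) (hα : 0 < α) (hβ : 0 < β)
    (hm : 2 ≤ m) : turanTerm y μ α β m 0 + turanTerm y μ α β m m < 0 := by
  have hc : 0 < y 0 * (y m / m.factorial) := by
    have := hy 0; have := hy m; positivity
  unfold turanTerm
  simp only [Nat.sub_zero, Nat.sub_self, coeff_eq_mul_pochRatio, pochRatio_zero,
    Nat.factorial_zero, Nat.cast_one, div_one]
  linarith [mul_lt_mul_of_pos_left (pochRatio_add_turan_strict hm hμ hα hβ) hc]

end turanTerm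

lemma two_mul_sum_range_eq_sum_add_reflect (F : ℕ → ℝ) (m : ℕ) :
    2 * ∑ k ∈ range (m + 1), F k = ∑ k ∈ range (m + 1), (F k + F (m - k)) := by
  have h := sum_range_reflect F (m + 1)
  simp only [add_tsub_cancel_right] at h
  rw [sum_add_distrib, h]
  ring

lemma sum_range_nonpos_of_add_reflect_nonpos {F : ℕ → ℝ} {m : ℕ}
    (h : ∀ k ≤ m, F k + F (m - k) ≤ 0) : ∑ k ∈ range (m + 1), F k ≤ 0 := by
  have := sum_nonpos fun k hk => h k (mem_range_succ_iff.1 hk)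
  linarith [two_mul_sum_range_eq_sum_add_reflect F m]

lemma sum_range_neg_of_add_reflect_nonpos {F : ℕ → ℝ} {m : ℕ}
    (h : ∀ k ≤ m, F k + F (m - k) ≤ 0) (h0 : F 0 + F m < 0) : ∑ k ∈ range (m + 1), F k < 0 := by
  have : ∑ k ∈ range (m + 1), (F k + F (m - k)) < 0 :=
    sum_neg' (fun k hk => h k (mem_range_succ_iff.1 hk))
      ⟨0, mem_range.2 m.succ_pos, by simpa using h0⟩
  linarith [two_mul_sum_range_eq_sum_add_reflect F m]

theorem stmt_16 (y : ℕ → ℝ) (hy : ∀ k, 0 ≤ y k)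
    (μ α β : ℝ) (hμ : 0 < μ) (hα : 0 < α) (hβ : 0 < β) :
    (∀ m : ℕ,
      ∑ k ∈ Finset.range (m + 1),
        (coeff y k (μ + α) * coeff y (m - k) (μ + β)
          - coeff y k μ * coeff y (m - k) (μ + α + β)) ≤ 0) ∧
    ((∀ k, 0 < y k) → ∀ m : ℕ, 2 ≤ m →
      ∑ k ∈ Finset.range (m + 1),
        (coeff y k (μ + α) * coeff y (m - k) (μ + β)
          - coeff y k μ * coeff y (m - k) (μ + α + β)) < 0) :=
  ⟨fun _ => sum_range_nonpos_of_add_reflect_nonpos fun _ hk =>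
      turanTerm_add_reflect_nonpos hy hμ hα.le hβ.le hk,
    fun hy' _ hm => sum_range_neg_of_add_reflect_nonpos
      (fun _ hk => turanTerm_add_reflect_nonpos hy hμ hα.le hβ.le hk)
      (turanTerm_zero_add_self_neg hy' hμ hα hβ hm)⟩
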